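/- arXiv:0803.0611 — 7 statements merged into one kernel-verified Lean document; each statement's English description precedes it below -/
import Mathlib

section
/- Let F ⊆ [0,1) be a finite set and let U be a convex subset of the space of piecewise-smooth loops with 0 ∈ U, satisfying: for every finite set G ⊆ [0,1) there exist a compact set C ⊆ ℝ ∖ (G + ℤ), an integer n ≥ 1 and a real ε > 0 such that every piecewise-smooth loop γ with breaks in G + ℤ satisfying sup_{t ∈ ℝ} |γ(t)| < ε and |γ⁽ᵏ⁾(t)| < ε for all t ∈ C and all 1 ≤ k ≤ n belongs to U. Then there exists η > 0 such that every piecewise-smooth loop γ with breaks in F + ℤ satisfying sup_{t ∈ ℝ} |γ(t)| < η belongs to U. -/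
/-- The set `F + ℤ = {f + k : f ∈ F, k ∈ ℤ}` of integer translates of points of `F`. -/
def BreaksSet (F : Set ℝ) : Set ℝ := {x : ℝ | ∃ f ∈ F, ∃ k : ℤ, x = f + k}

/-- `γ` is a loop (1-periodic), continuous, and infinitely differentiable off `F + ℤ`;
i.e. a piecewise-smooth loop with breaks in `F + ℤ`. -/
def HasBreaksIn (γ : ℝ → ℝ) (F : Set ℝ) : Prop :=
  (∀ t, γ (t + 1) = γ t) ∧ Continuous γ ∧ ContDiffOn ℝ (⊤ : ℕ∞) γ (BreaksSet F)ᶜ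

/-- `γ` is a piecewise-smooth loop. -/
def IsPiecewiseSmooth (γ : ℝ → ℝ) : Prop :=
  ∃ F : Set ℝ, F.Finite ∧ F ⊆ Set.Ico 0 1 ∧ HasBreaksIn γ F

/-- A piecewise-smooth loop with breaks in `F + ℤ`, all of whose derivatives are
bounded on the complement of the breaks. -/
def BoundedBreaksIn (γ : ℝ → ℝ) (F : Set ℝ) : Prop :=
  HasBreaksIn γ F ∧ ∀ k : ℕ, ∃ M : ℝ, ∀ t ∈ (BreaksSet F)ᶜ, |iteratedDeriv k γ t| ≤ M

/-- `γ` is a piecewise-smooth bounded loop. -/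
def IsPiecewiseSmoothBounded (γ : ℝ → ℝ) : Prop :=
  ∃ F : Set ℝ, F.Finite ∧ F ⊆ Set.Ico 0 1 ∧ BoundedBreaksIn γ F

/-- The right limit of `f` at `t`, with the variable ranging outside the set `B`. -/
def RightLimAt (f : ℝ → ℝ) (B : Set ℝ) (t L : ℝ) : Prop :=
  Filter.Tendsto f (nhdsWithin t (Set.Ioi t \ B)) (nhds L)

/-- The left limit of `f` at `t`, with the variable ranging outside the set `B`. -/
def LeftLimAt (f : ℝ → ℝ) (B : Set ℝ) (t L : ℝ) : Prop :=
  Filter.Tendsto f (nhdsWithin t (Set.Iio t \ B)) (nhds L)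

/-- `t` is a sign-change point of `f` (relative to the break set `B`): the one-sided
limits of `f` at `t` exist and have opposite nonzero signs. -/
def SignChangeAt (f : ℝ → ℝ) (B : Set ℝ) (t : ℝ) : Prop :=
  ∃ Lp Lm : ℝ, RightLimAt f B t Lp ∧ LeftLimAt f B t Lm ∧ Lp * Lm < 0

/-- The 1-periodic step function equal to `1` on `[0, 1/2) + ℤ` and `-1` on `[1/2, 1) + ℤ`. -/
noncomputable def stepLoop : ℝ → ℝ := fun t => if Int.fract t < 1/2 then 1 else -1

open Real Filter

private lemma breaksSet_mono' {F G : Set ℝ} (h : F ⊆ G) : BreaksSet F ⊆ BreaksSet G := by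
  rintro x ⟨f, hf, k, rfl⟩; exact ⟨f, h hf, k, rfl⟩

private lemma evEq_iteratedDeriv' {f g : ℝ → ℝ} {t : ℝ} (k : ℕ) (h : f =ᶠ[nhds t] g) :
    iteratedDeriv k f t = iteratedDeriv k g t := by
  have H : ∀ k : ℕ, iteratedDeriv k f =ᶠ[nhds t] iteratedDeriv k g := by
    intro k
    induction k with
    | zero => simpa [iteratedDeriv_zero] using h
    | succ k ih => simpa [iteratedDeriv_succ] using ih.deriv
  exact (H k).eq_of_nhds

private lemma iteratedDeriv_zero_fun' (k : ℕ) :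
    iteratedDeriv k (fun _ : ℝ => (0:ℝ)) = fun _ => (0:ℝ) := by
  induction k with
  | zero => simp [iteratedDeriv_zero]
  | succ k ih => rw [iteratedDeriv_succ, ih]; funext x; simp

set_option maxHeartbeats 1000000 in
theorem stmt0 (F : Set ℝ) (hFfin : F.Finite) (hFsub : F ⊆ Set.Ico 0 1)
    (U : Set (ℝ → ℝ)) (hU0 : (0 : ℝ → ℝ) ∈ U)
    (hUsub : ∀ γ ∈ U, IsPiecewiseSmooth γ)
    (hUconv : Convex ℝ U)
    (hU : ∀ G : Set ℝ, G.Finite → G ⊆ Set.Ico 0 1 →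
      ∃ C : Set ℝ, IsCompact C ∧ C ⊆ (BreaksSet G)ᶜ ∧
        ∃ n : ℕ, 1 ≤ n ∧ ∃ ε : ℝ, 0 < ε ∧
          ∀ γ : ℝ → ℝ, HasBreaksIn γ G → (∀ t, |γ t| < ε) →
            (∀ t ∈ C, ∀ k : ℕ, 1 ≤ k → k ≤ n → |iteratedDeriv k γ t| < ε) →
            γ ∈ U) :
    ∃ η : ℝ, 0 < η ∧
      ∀ γ : ℝ → ℝ, HasBreaksIn γ F → (∀ t, |γ t| < η) → γ ∈ U := by
  classical
  -- oracle data for each putative extra break point x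
  have H : ∀ x : ℝ, ∃ (C : Set ℝ) (n : ℕ) (ε : ℝ), IsCompact C ∧ 0 < ε ∧
      (x ∈ Set.Ico (0:ℝ) 1 → (C ⊆ (BreaksSet (insert x F))ᶜ ∧
        ∀ γ : ℝ → ℝ, HasBreaksIn γ (insert x F) → (∀ t, |γ t| < ε) →
          (∀ t ∈ C, ∀ k : ℕ, 1 ≤ k → k ≤ n → |iteratedDeriv k γ t| < ε) → γ ∈ U)) := by
    intro x
    by_cases hx : x ∈ Set.Ico (0:ℝ) 1
    · obtain ⟨C, hC, hCsub, n, _hn1, ε, hε, hcls⟩ := hU (insert x F) (hFfin.insert x)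
        (Set.insert_subset hx hFsub)
      exact ⟨C, n, ε, hC, hε, fun _ => ⟨hCsub, hcls⟩⟩
    · exact ⟨∅, 1, 1, isCompact_empty, one_pos, fun h => absurd h hx⟩
  choose C n ε hCcpt hεpos hgood using H
  -- choose a bump radius ρ x for every x
  have Hr : ∀ x : ℝ, ∃ ρ : ℝ, 0 < ρ ∧ ρ ≤ 1/8 ∧
      (x ∈ Set.Ico (0:ℝ) 1 → ∀ t ∈ C x, Real.cos (2*π*(t - x)) < Real.cos (2*π*ρ)) := by
    intro x
    by_cases hne : (C x).Nonempty
    · by_cases hx : x ∈ Set.Ico (0:ℝ) 1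
      · have hcont : ContinuousOn (fun t : ℝ => Real.cos (2*π*(t - x))) (C x) :=
          (Real.continuous_cos.comp (continuous_const.mul (continuous_id.sub continuous_const))).continuousOn
        obtain ⟨t₀, ht₀, hmax⟩ := (hCcpt x).exists_isMaxOn hne hcont
        set μ := Real.cos (2*π*(t₀ - x)) with hμdef
        have hμ1 : μ < 1 := by
          rcases lt_or_eq_of_le (Real.cos_le_one (2*π*(t₀ - x))) with h | h
          · exact h
          · exfalso
            obtain ⟨m, hm⟩ := (Real.cos_eq_one_iff (2*π*(t₀ - x))).mp h
            have hπ : (0:ℝ) < π := Real.pi_pos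
            have ht0x : t₀ - x = (m:ℝ) := by nlinarith [hm]
            have : t₀ ∈ BreaksSet (insert x F) := ⟨x, Set.mem_insert _ _, m, by linarith⟩
            exact ((hgood x hx).1 ht₀) this
        obtain ⟨δ, hδpos, hδ⟩ := Metric.continuousAt_iff.mp
          (Real.continuous_cos.continuousAt (x := (0:ℝ))) (1 - μ) (by linarith)
        have hπ : (0:ℝ) < π := Real.pi_pos
        refine ⟨min (1/8) (δ/(8*π+8)), by positivity, min_le_left _ _, ?_⟩
        intro _ t ht
        set ρ := min (1/8) (δ/(8*π+8)) with hρdef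
        have hρpos : 0 < ρ := by positivity
        have hρle : ρ ≤ δ/(8*π+8) := min_le_right _ _
        have harg : dist (2*π*ρ) 0 < δ := by
          rw [Real.dist_eq, sub_zero, abs_of_pos (by positivity)]
          have k1 : ρ*(8*π+8) ≤ δ := by
            rw [← le_div_iff₀ (by positivity)]; exact hρle
          nlinarith [hρpos]
        have h2 := hδ harg
        rw [Real.cos_zero, Real.dist_eq] at h2
        have h3 := abs_lt.mp h2
        have hcos : μ < Real.cos (2*π*ρ) := by linarith [h3.1]
        exact lt_of_le_of_lt (hmax ht) hcos
      · exact ⟨1/8, by norm_num, le_refl _, fun h => absurd h hx⟩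
    · exact ⟨1/8, by norm_num, le_refl _, fun _ t ht => absurd ⟨t, ht⟩ hne⟩
  choose ρ hρ0 hρ8 hρprop using Hr
  have hπ : (0:ℝ) < π := Real.pi_pos
  -- denominator of the bump argument
  have hd : ∀ x : ℝ, Real.cos (2*π*ρ x) < Real.cos (π*ρ x) := by
    intro x
    have h1 : (0:ℝ) ≤ π*ρ x := by nlinarith [hρ0 x]
    have h2 : 2*π*ρ x ≤ π := by nlinarith [hρ8 x, hρ0 x]
    exact Real.strictAntiOn_cos ⟨h1, by nlinarith [hρ0 x]⟩
      ⟨by nlinarith [hρ0 x], h2⟩ (by nlinarith [hρ0 x])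
  -- the periodic smooth bump at x
  set b : ℝ → ℝ → ℝ := fun x t => Real.smoothTransition
      ((Real.cos (2*π*(t - x)) - Real.cos (2*π*ρ x)) /
        (Real.cos (π*ρ x) - Real.cos (2*π*ρ x))) with hbdef
  have hb_smooth : ∀ x, ContDiff ℝ (⊤:ℕ∞) (b x) := by
    intro x
    apply (contDiff_infty.2 (fun _ => Real.smoothTransition.contDiff)).comp
    exact ((Real.contDiff_cos.comp
      (contDiff_const.mul (contDiff_id.sub contDiff_const))).sub contDiff_const).div_const _
  have hb_nonneg : ∀ x t, 0 ≤ b x t := fun x t => Real.smoothTransition.nonneg _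
  have hb_le_one : ∀ x t, b x t ≤ 1 := fun x t => Real.smoothTransition.le_one _
  have hb_per : ∀ x t, b x (t+1) = b x t := by
    intro x t
    have : 2*π*(t+1-x) = 2*π*(t-x) + 2*π := by ring
    simp only [hbdef, this, Real.cos_add_two_pi]
  have hb_one : ∀ (x t : ℝ) (k : ℤ), |t - x - (k:ℝ)| ≤ ρ x / 2 → b x t = 1 := by
    intro x t k hk
    apply Real.smoothTransition.one_of_one_le
    rw [le_div_iff₀ (by linarith [hd x])]
    have hco : Real.cos (2*π*(t-x)) = Real.cos (2*π*(t-x-(k:ℝ))) := by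
      have : 2*π*(t-x) = 2*π*(t-x-(k:ℝ)) + (k:ℝ)*(2*π) := by push_cast; ring
      rw [this, Real.cos_add_int_mul_two_pi]
    have habs : Real.cos (2*π*(t-x-(k:ℝ))) = Real.cos |2*π*(t-x-(k:ℝ))| :=
      (Real.cos_abs _).symm
    have h1 : |2*π*(t-x-(k:ℝ))| ≤ π*ρ x := by
      rw [abs_mul, abs_of_pos (by positivity)]
      nlinarith [abs_nonneg (t-x-(k:ℝ))]
    have h2 : π*ρ x ≤ π := by nlinarith [hρ8 x, hρ0 x]
    have h3 : Real.cos (π*ρ x) ≤ Real.cos |2*π*(t-x-(k:ℝ))| :=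
      Real.cos_le_cos_of_nonneg_of_le_pi (abs_nonneg _) h2 h1
    rw [hco, habs]
    nlinarith
  have hb_zero : ∀ (x t : ℝ), Real.cos (2*π*(t-x)) ≤ Real.cos (2*π*ρ x) → b x t = 0 := by
    intro x t h
    apply Real.smoothTransition.zero_of_nonpos
    apply div_nonpos_of_nonpos_of_nonneg (by linarith) (by linarith [hd x])
  -- the periodic covering sets
  set W : ℝ → Set ℝ := fun x => if x ∈ Set.Ico (0:ℝ) 1 then
      Metric.ball x (ρ x / 2) ∪ Metric.ball (x+1) (ρ x / 2) else ∅ with hWdef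
  have hWopen : ∀ x, IsOpen (W x) := by
    intro x
    simp only [hWdef]
    split_ifs
    · exact (Metric.isOpen_ball).union Metric.isOpen_ball
    · exact isOpen_empty
  have hcover : Set.Icc (0:ℝ) 1 ⊆ ⋃ x, W x := by
    intro y hy
    rcases eq_or_lt_of_le hy.2 with h1 | h1
    · refine Set.mem_iUnion.mpr ⟨0, ?_⟩
      have h0 : (0:ℝ) ∈ Set.Ico (0:ℝ) 1 := ⟨le_refl _, by norm_num⟩
      simp only [hWdef, if_pos h0]
      right
      rw [Metric.mem_ball, Real.dist_eq, h1]
      simp [abs_of_nonpos]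
      linarith [hρ0 0]
    · refine Set.mem_iUnion.mpr ⟨y, ?_⟩
      have h0 : y ∈ Set.Ico (0:ℝ) 1 := ⟨hy.1, h1⟩
      simp only [hWdef, if_pos h0]
      left
      rw [Metric.mem_ball, Real.dist_eq]
      simp
      linarith [hρ0 y]
  obtain ⟨s, hs⟩ := isCompact_Icc.elim_finite_subcover W hWopen hcover
  set s' : Finset ℝ := s.filter (fun x => x ∈ Set.Ico (0:ℝ) 1) with hs'def
  -- the normalizing sum
  set S : ℝ → ℝ := fun t => ∑ x ∈ s', b x t with hSdef
  have hS_smooth : ContDiff ℝ (⊤:ℕ∞) S := ContDiff.sum (fun i _ => hb_smooth i)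
  have hS1 : ∀ t, 1 ≤ S t := by
    intro t
    have hmem : Int.fract t ∈ Set.Icc (0:ℝ) 1 := ⟨Int.fract_nonneg t, (Int.fract_lt_one t).le⟩
    obtain ⟨x, hxmem⟩ := Set.mem_iUnion.mp (hs hmem)
    obtain ⟨hxs, hxW⟩ := Set.mem_iUnion.mp hxmem
    by_cases hx : x ∈ Set.Ico (0:ℝ) 1
    · have hxs' : x ∈ s' := Finset.mem_filter.mpr ⟨hxs, hx⟩
      rw [hWdef] at hxW
      simp only [if_pos hx] at hxW
      have hfr : Int.fract t = t - (⌊t⌋:ℝ) := Int.self_sub_floor t |>.symm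
      have hb1 : b x t = 1 := by
        rcases hxW with h | h
        · apply hb_one x t ⌊t⌋
          rw [Metric.mem_ball, Real.dist_eq] at h
          rw [hfr] at h
          have : t - x - (⌊t⌋:ℝ) = t - (⌊t⌋:ℝ) - x := by ring
          rw [this]
          linarith [le_of_lt h]
        · apply hb_one x t (⌊t⌋ + 1)
          rw [Metric.mem_ball, Real.dist_eq] at h
          rw [hfr] at h
          have heq : t - x - ((⌊t⌋:ℤ) + 1 : ℤ) = t - (⌊t⌋:ℝ) - (x+1) := by push_cast; ring
          rw [heq]
          linarith [le_of_lt h]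
      calc (1:ℝ) = b x t := hb1.symm
        _ ≤ S t := Finset.single_le_sum (fun i _ => hb_nonneg i t) hxs'
    · rw [hWdef] at hxW
      simp only [if_neg hx] at hxW
      exact absurd hxW (Set.notMem_empty _)
  have hS_ne : ∀ t, S t ≠ 0 := fun t => by linarith [hS1 t]
  -- choose η
  set E : ℝ := ∑ x ∈ s', (ε x)⁻¹ with hEdef
  have hE0 : 0 ≤ E := Finset.sum_nonneg (fun x _ => inv_nonneg.mpr (le_of_lt (hεpos x)))
  set η : ℝ := 1/(2 + 4*E) with hηdef
  have hη : 0 < η := by positivity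
  refine ⟨η, hη, ?_⟩
  intro γ hγ hγlt
  -- the blocks
  set A : ℝ → ℝ → ℝ := fun x t => (ε x/(2*η)) * (b x t / S t) with hAdef
  have hA_smooth : ∀ x, ContDiff ℝ (⊤:ℕ∞) (A x) :=
    fun x => contDiff_const.mul ((hb_smooth x).div hS_smooth hS_ne)
  set β : ℝ → ℝ → ℝ := fun x t => A x t * γ t with hβdef
  have hβU : ∀ x ∈ s', β x ∈ U := by
    intro x hx
    have hxIco : x ∈ Set.Ico (0:ℝ) 1 := (Finset.mem_filter.mp hx).2
    apply (hgood x hxIco).2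
    · -- HasBreaksIn
      refine ⟨?_, ?_, ?_⟩
      · intro t
        have hSper : S (t+1) = S t := by
          simp only [hSdef]
          exact Finset.sum_congr rfl (fun i _ => hb_per i t)
        simp only [hβdef, hAdef]
        rw [hγ.1 t, hb_per x t, hSper]
      · exact ((hA_smooth x).continuous).mul hγ.2.1
      · have hsub : (BreaksSet (insert x F))ᶜ ⊆ (BreaksSet F)ᶜ :=
          Set.compl_subset_compl.mpr (breaksSet_mono' (Set.subset_insert _ _))
        exact ((hA_smooth x).contDiffOn).mul (hγ.2.2.mono hsub)
    · -- sup bound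
      intro t
      have hbS0 : 0 ≤ b x t / S t := div_nonneg (hb_nonneg x t) (by linarith [hS1 t])
      have hbS1 : b x t / S t ≤ 1 := by
        rw [div_le_one (by linarith [hS1 t])]
        linarith [hb_le_one x t, hS1 t]
      have hc : 0 < ε x/(2*η) := div_pos (hεpos x) (by linarith [hη])
      have : |β x t| = (ε x/(2*η)) * (b x t / S t) * |γ t| := by
        simp only [hβdef, hAdef, abs_mul]
        rw [abs_of_pos hc, abs_of_nonneg hbS0]
      rw [this]
      have h1 : (ε x/(2*η)) * (b x t / S t) * |γ t| ≤ (ε x/(2*η)) * |γ t| := by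
        nlinarith [abs_nonneg (γ t), mul_nonneg (mul_nonneg (le_of_lt hc) (sub_nonneg.mpr hbS1)) (abs_nonneg (γ t))]
      have h2 : (ε x/(2*η)) * |γ t| < (ε x/(2*η)) * η := by
        exact mul_lt_mul_of_pos_left (hγlt t) hc
      have h3 : (ε x/(2*η)) * η = ε x / 2 := by field_simp
      nlinarith [hεpos x]
    · -- derivative bound: all iterated derivatives vanish on C x
      intro t ht k hk1 _hk2
      have htc : Real.cos (2*π*(t-x)) < Real.cos (2*π*ρ x) := hρprop x hxIco t ht
      have hopen : IsOpen {u : ℝ | Real.cos (2*π*(u-x)) < Real.cos (2*π*ρ x)} :=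
        isOpen_lt (Real.continuous_cos.comp (continuous_const.mul (continuous_id.sub continuous_const))) continuous_const
      have hev : β x =ᶠ[nhds t] (fun _ => (0:ℝ)) := by
        apply Filter.eventuallyEq_of_mem (hopen.mem_nhds htc)
        intro u hu
        have hb0 : b x u = 0 := hb_zero x u (le_of_lt hu)
        simp only [hβdef, hAdef, hb0]
        ring
      rw [evEq_iteratedDeriv' k hev, iteratedDeriv_zero_fun' k]
      simpa using hεpos x
  -- assemble the convex combination
  obtain ⟨y₀, hy₀⟩ := Infinite.exists_notMem_finset s'
  set w : ℝ → ℝ := fun x => if x = y₀ then 1 - ∑ z ∈ s', 2*η/ε z else 2*η/ε x with hwdef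
  set Z : ℝ → (ℝ → ℝ) := fun x => if x = y₀ then (0 : ℝ → ℝ) else β x with hZdef
  have hwsum : ∑ z ∈ s', 2*η/ε z = 2*η*E := by
    rw [hEdef, Finset.mul_sum]
    exact Finset.sum_congr rfl (fun x _ => by rw [div_eq_mul_inv])
  have hwsum_le : ∑ z ∈ s', 2*η/ε z ≤ 1/2 := by
    have h24 : (0:ℝ) < 2+4*E := by linarith
    have heq : 2*(1/(2+4*E))*E = 2*E/(2+4*E) := by ring
    rw [hwsum, hηdef, heq, div_le_div_iff₀ h24 (by norm_num)]
    nlinarith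
  have hmem : (∑ x ∈ insert y₀ s', w x • Z x) ∈ U := by
    apply hUconv.sum_mem
    · intro i hi
      rcases Finset.mem_insert.mp hi with rfl | hi'
      · simp only [hwdef, if_pos rfl]
        linarith [hwsum_le]
      · have : i ≠ y₀ := fun h => hy₀ (h ▸ hi')
        simp only [hwdef, if_neg this]
        exact div_nonneg (by linarith) (le_of_lt (hεpos i))
    · have hrest : ∑ x ∈ s', w x = ∑ z ∈ s', 2*η/ε z := by
        apply Finset.sum_congr rfl
        intro x hx
        have : x ≠ y₀ := fun h => hy₀ (h ▸ hx)
        simp only [hwdef, if_neg this]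
      rw [Finset.sum_insert hy₀, hrest]
      simp only [hwdef, if_pos rfl]
      ring
    · intro i hi
      rcases Finset.mem_insert.mp hi with rfl | hi'
      · simp only [hZdef, if_pos rfl]
        exact hU0
      · have hne : i ≠ y₀ := fun h => hy₀ (h ▸ hi')
        simp only [hZdef, if_neg hne]
        exact hβU i hi'
  have hfinal : γ = ∑ x ∈ insert y₀ s', w x • Z x := by
    funext t
    rw [Finset.sum_insert hy₀]
    simp only [Pi.add_apply, Finset.sum_apply, Pi.smul_apply, smul_eq_mul]
    simp only [hZdef, hwdef, if_pos rfl, Pi.zero_apply, mul_zero, zero_add]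
    have hterm : ∀ x ∈ s',
        (if x = y₀ then 1 - ∑ z ∈ s', 2*η/ε z else 2*η/ε x) * (if x = y₀ then (0:ℝ→ℝ) else β x) t
          = b x t / S t * γ t := by
      intro x hx
      have hne : x ≠ y₀ := fun h => hy₀ (h ▸ hx)
      simp only [if_neg hne]
      simp only [hβdef, hAdef]
      have hcc : (2*η/ε x) * (ε x/(2*η)) = 1 := by
        rw [div_mul_div_comm, mul_comm (ε x) (2*η)]
        exact div_self (mul_ne_zero (by linarith [hη]) (ne_of_gt (hεpos x)))
      have hre : (2*η/ε x) * (ε x/(2*η) * (b x t / S t) * γ t)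
          = ((2*η/ε x) * (ε x/(2*η))) * (b x t / S t * γ t) := by ring
      rw [hre, hcc, one_mul]
    rw [Finset.sum_congr rfl hterm]
    have hstep : ∑ x ∈ s', b x t / S t * γ t = (∑ x ∈ s', b x t) / S t * γ t := by
      rw [← Finset.sum_mul, ← Finset.sum_div]
    have hSt : S t = ∑ x ∈ s', b x t := by simp only [hSdef]
    rw [hstep, ← hSt, div_self (hS_ne t), one_mul]
  rw [hfinal]
  exact hmem
end

section
/- For every t₀ ∈ [0,1) and every sequence (a_k)_{k ≥ 1} of real numbers, there exists a piecewise-smooth bounded loop γ with breaks in {t₀} + ℤ such that for every k ≥ 1 the one-sided limits of the k-th derivative satisfy γ⁽ᵏ⁾(t₀+) − γ⁽ᵏ⁾(t₀−) = a_k. -/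
open Filter Topology Set Metric
open scoped ContDiff Nat

theorem exists_norm_iteratedDeriv_le {F : Type*} [NormedAddCommGroup F] [NormedSpace ℝ F]
    {f : ℝ → F} (hf : ContDiff ℝ ∞ f) (hsupp : HasCompactSupport f) (j : ℕ) :
    ∃ M, ∀ x, ‖iteratedDeriv j f x‖ ≤ M := by
  simp only [← norm_iteratedFDeriv_eq_norm_iteratedDeriv]
  exact (hf.continuous_iteratedFDeriv (mod_cast le_top)).bounded_above_of_compact_support
    (hsupp.iteratedFDeriv j)

theorem exists_one_le_norm_iteratedDeriv_comp_mul_div_pow_le {G : ℝ → ℝ} (hG : ContDiff ℝ ∞ G)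
    (hsupp : HasCompactSupport G) (k : ℕ) {ε : ℝ} (hε : 0 < ε) :
    ∃ c : ℝ, 1 ≤ c ∧ ∀ j < k, ∀ x, ‖iteratedDeriv j (fun x => G (c * x) / c ^ k) x‖ ≤ ε := by
  have small : ∀ j < k, ∀ᶠ c : ℝ in atTop,
      ∀ x, ‖iteratedDeriv j (fun x => G (c * x) / c ^ k) x‖ ≤ ε := by
    intro j hj
    obtain ⟨M, hM⟩ := exists_norm_iteratedDeriv_le hG hsupp j
    have hM0 : 0 ≤ M := (norm_nonneg _).trans (hM 0)
    filter_upwards [eventually_ge_atTop 1,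
      (tendsto_const_nhds.div_atTop tendsto_id).eventually (ge_mem_nhds hε)] with c hc hMc x
    have hpow : c ^ j * c ≤ c ^ k := by
      rw [← pow_succ]; exact pow_le_pow_right₀ hc hj
    rw [iteratedDeriv_div_const, iteratedDeriv_comp_const_mul (hG.of_le (mod_cast le_top)),
      norm_div, norm_mul, norm_pow, norm_pow, Real.norm_of_nonneg (by positivity : (0:ℝ) ≤ c)]
    calc c ^ j * ‖iteratedDeriv j G (c * x)‖ / c ^ k ≤ c ^ j * M / (c ^ j * c) := by
          gcongr
          · exact hM _
      _ = M / c := by field_simp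
      _ ≤ ε := hMc
  obtain ⟨c, hc, hsmall⟩ := ((eventually_ge_atTop 1).and
    ((Finset.range k).eventually_all.2 fun j hj => small j (Finset.mem_range.1 hj))).exists
  exact ⟨c, hc, fun j hj => hsmall j (Finset.mem_range.2 hj)⟩

theorem exists_summable_norm_iteratedFDeriv_le {F : ℕ → ℝ → ℝ} {u : ℕ → ℝ}
    (hF : ∀ k, ContDiff ℝ ∞ (F k)) (hsupp : ∀ k, HasCompactSupport (F k)) (hu : Summable u)
    (hsmall : ∀ j k, j < k → ∀ x, ‖iteratedDeriv j (F k) x‖ ≤ u k) :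
    ∃ v : ℕ → ℕ → ℝ, (∀ j, Summable (v j)) ∧ ∀ j k x, ‖iteratedFDeriv ℝ j (F k) x‖ ≤ v j k := by
  choose M hM using fun k => exists_norm_iteratedDeriv_le (hF k) (hsupp k)
  refine ⟨fun j k => if j < k then u k else M k j, fun j => ?_, fun j k x => ?_⟩
  · refine hu.congr_cofinite ?_
    filter_upwards [Nat.cofinite_eq_atTop ▸ eventually_gt_atTop j] with k hk
    simp [hk]
  · rw [norm_iteratedFDeriv_eq_norm_iteratedDeriv]
    dsimp only
    split_ifs with hjk
    · exact hsmall j k hjk x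
    · exact hM k j x

theorem iteratedDeriv_tsum_apply {ι : Type*} {f : ι → ℝ → ℝ} {v : ℕ → ι → ℝ}
    (hf : ∀ i, ContDiff ℝ ∞ (f i)) (hv : ∀ j, Summable (v j))
    (hfv : ∀ j i x, ‖iteratedFDeriv ℝ j (f i) x‖ ≤ v j i) (j : ℕ) (x : ℝ) :
    iteratedDeriv j (fun y => ∑' i, f i y) x = ∑' i, iteratedDeriv j (f i) x := by
  have hsum : Summable fun i => iteratedFDeriv ℝ j (f i) x :=
    .of_norm_bounded (hv j) fun i => hfv j i x
  simp only [iteratedDeriv_eq_iteratedFDeriv]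
  rw [iteratedFDeriv_tsum_apply hf (fun j _ => hv j) (fun j i x _ => hfv j i x) le_top,
    ContinuousMultilinearMap.tsum_eval hsum]

theorem exists_contDiff_iteratedDeriv_zero_eq (b : ℕ → ℝ) {r : ℝ} (hr : 0 < r) :
    ∃ g : ℝ → ℝ, ContDiff ℝ ∞ g ∧ (∀ x, r ≤ |x| → g x = 0) ∧ ∀ j, iteratedDeriv j g 0 = b j := by
  let ψ : ContDiffBump (0 : ℝ) := ⟨r / 2, r, half_pos hr, half_lt_self hr⟩
  let G : ℕ → ℝ → ℝ := fun k x => b k * x ^ k / k ! * ψ x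
  have hG : ∀ k, ContDiff ℝ ∞ (G k) := fun k =>
    ((contDiff_const.mul (contDiff_id.pow k)).div_const _).mul ψ.contDiff
  have hGsupp : ∀ k, HasCompactSupport (G k) := fun k => ψ.hasCompactSupport.mul_left
  choose c hc hsmall using fun k =>
    exists_one_le_norm_iteratedDeriv_comp_mul_div_pow_le (hG k) (hGsupp k) k
      (pow_pos (one_half_pos (α := ℝ)) k)
  let F : ℕ → ℝ → ℝ := fun k x => G k (c k * x) / c k ^ k
  have hF_eq : ∀ k x, F k x = b k * x ^ k / k ! * ψ (c k * x) := fun k x => by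
    have : c k ≠ 0 := by linarith [hc k]
    simp only [F, G, mul_pow]
    field_simp
  have hF : ∀ k, ContDiff ℝ ∞ (F k) := fun k =>
    ((hG k).comp (contDiff_const.mul contDiff_id)).div_const _
  have hF_zero : ∀ k x, r ≤ |x| → F k x = 0 := fun k x hx => by
    rw [hF_eq, ψ.zero_of_le_dist, mul_zero]
    rw [Real.dist_0_eq_abs, abs_mul, abs_of_pos (by linarith [hc k])]
    nlinarith [hc k, abs_nonneg x]
  have hFsupp : ∀ k, HasCompactSupport (F k) := fun k =>
    HasCompactSupport.intro (isCompact_closedBall 0 r) fun x hx => hF_zero k x <| by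
      rw [mem_closedBall_zero_iff, Real.norm_eq_abs, not_le] at hx
      exact hx.le
  have hF_near : ∀ k, F k =ᶠ[𝓝 0] fun x => b k / k ! * x ^ k := fun k => by
    have hck : 0 < c k := by linarith [hc k]
    filter_upwards [ball_mem_nhds 0 (by positivity : 0 < r / (2 * c k))] with x hx
    rw [mem_ball_zero_iff, Real.norm_eq_abs] at hx
    rw [hF_eq, ψ.one_of_mem_closedBall, mul_one, mul_div_right_comm]
    rw [mem_closedBall_zero_iff, Real.norm_eq_abs, abs_mul, abs_of_pos hck]
    calc c k * |x| ≤ c k * (r / (2 * c k)) := by gcongr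
      _ = r / 2 := by field_simp
  have hF_jet : ∀ k j, iteratedDeriv j (F k) 0 = if k = j then b k else 0 := fun k j => by
    rw [(hF_near k).iteratedDeriv_eq, iteratedDeriv_const_mul_field, iteratedDeriv_fun_pow_zero]
    obtain rfl | hkj := eq_or_ne k j
    · simp [Nat.factorial_ne_zero]
    · simp [hkj, hkj.symm]
  obtain ⟨v, hv, hFv⟩ := exists_summable_norm_iteratedFDeriv_le hF hFsupp
    summable_geometric_two fun j k hjk x => hsmall k j hjk x
  refine ⟨fun x => ∑' k, F k x, contDiff_tsum hF (fun j _ => hv j) fun j k x _ => hFv j k x,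
    fun x hx => by simp [hF_zero _ x hx], fun j => ?_⟩
  rw [iteratedDeriv_tsum_apply hF hv hFv]
  simp_rw [hF_jet]
  exact tsum_ite_eq j b

noncomputable def fractLoop (g : ℝ → ℝ) (t₀ t : ℝ) : ℝ := g (Int.fract (t - t₀))

section fractLoop

variable {g : ℝ → ℝ} {t₀ : ℝ}

theorem fractLoop_add_one (t : ℝ) : fractLoop g t₀ (t + 1) = fractLoop g t₀ t := by
  simp [fractLoop, add_sub_right_comm]

theorem continuous_fractLoop (hg : Continuous g) (h01 : g 0 = g 1) :
    Continuous (fractLoop g t₀) :=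
  (hg.continuousOn.comp_fract'' h01).comp (continuous_sub_right t₀)

theorem fractLoop_eqOn_Ioo (n : ℤ) :
    EqOn (fractLoop g t₀) (fun s => g (s - (t₀ + n))) (Ioo (t₀ + n) (t₀ + n + 1)) := by
  intro s hs
  have hfloor : ⌊s - t₀⌋ = n := Int.floor_eq_iff.2 ⟨by linarith [hs.1], by linarith [hs.2]⟩
  simp only [fractLoop, Int.fract, hfloor, sub_sub]

theorem iteratedDeriv_fractLoop_of_mem_Ioo (n : ℤ) (k : ℕ) {s : ℝ}
    (hs : s ∈ Ioo (t₀ + n) (t₀ + n + 1)) :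
    iteratedDeriv k (fractLoop g t₀) s = iteratedDeriv k g (s - (t₀ + n)) := by
  rw [(fractLoop_eqOn_Ioo n).iteratedDeriv_of_isOpen isOpen_Ioo k hs,
    iteratedDeriv_comp_sub_const]

theorem exists_mem_Ioo_of_notMem_breaksSet {x : ℝ} (hx : x ∉ BreaksSet {t₀}) :
    ∃ n : ℤ, x ∈ Ioo (t₀ + n) (t₀ + n + 1) := by
  refine ⟨⌊x - t₀⌋, lt_of_le_of_ne ?_ ?_, by linarith [Int.lt_floor_add_one (x - t₀)]⟩
  · linarith [Int.floor_le (x - t₀)]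
  · intro hx'
    exact hx ⟨t₀, rfl, ⌊x - t₀⌋, hx'.symm⟩

theorem contDiffOn_fractLoop (hg : ContDiff ℝ ∞ g) :
    ContDiffOn ℝ ∞ (fractLoop g t₀) (BreaksSet {t₀})ᶜ := by
  intro x hx
  obtain ⟨n, hn⟩ := exists_mem_Ioo_of_notMem_breaksSet hx
  have hloc : fractLoop g t₀ =ᶠ[𝓝 x] fun s => g (s - (t₀ + n)) :=
    Filter.eventuallyEq_of_mem (isOpen_Ioo.mem_nhds hn) (fractLoop_eqOn_Ioo n)
  exact ((hg.comp (contDiff_id.sub contDiff_const)).contDiffAt.congr_of_eventuallyEq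
    hloc).contDiffWithinAt

theorem boundedBreaksIn_fractLoop (hg : ContDiff ℝ ∞ g) (h01 : g 0 = g 1) :
    BoundedBreaksIn (fractLoop g t₀) {t₀} := by
  refine ⟨⟨fractLoop_add_one, continuous_fractLoop hg.continuous h01, contDiffOn_fractLoop hg⟩,
    fun k => ?_⟩
  obtain ⟨M, hM⟩ := isCompact_Icc.exists_bound_of_continuousOn
    (hg.continuous_iteratedDeriv k (mod_cast le_top)).continuousOn (s := Icc 0 1)
  refine ⟨M, fun t ht => ?_⟩
  obtain ⟨n, hn⟩ := exists_mem_Ioo_of_notMem_breaksSet ht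
  rw [iteratedDeriv_fractLoop_of_mem_Ioo n k hn, ← Real.norm_eq_abs]
  exact hM _ ⟨by linarith [hn.1], by linarith [hn.2]⟩

theorem rightLimAt_iteratedDeriv_fractLoop {k : ℕ} (hg : Continuous (iteratedDeriv k g))
    (B : Set ℝ) : RightLimAt (iteratedDeriv k (fractLoop g t₀)) B t₀ (iteratedDeriv k g 0) := by
  have hlim : Tendsto (fun s => iteratedDeriv k g (s - (t₀ + ((0 : ℤ) : ℝ)))) (𝓝 t₀)
      (𝓝 (iteratedDeriv k g 0)) :=
    (hg.comp (continuous_sub_right _)).tendsto' _ _ (by simp)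
  refine ((hlim.mono_left nhdsWithin_le_nhds).congr' ?_).mono_left
    (nhdsWithin_mono _ sdiff_subset)
  filter_upwards [Ioo_mem_nhdsGT (show t₀ < t₀ + 1 by linarith)] with s hs
  exact (iteratedDeriv_fractLoop_of_mem_Ioo 0 k (by simpa using hs)).symm

theorem leftLimAt_iteratedDeriv_fractLoop {k : ℕ} (hg : Continuous (iteratedDeriv k g))
    (B : Set ℝ) : LeftLimAt (iteratedDeriv k (fractLoop g t₀)) B t₀ (iteratedDeriv k g 1) := by
  have hlim : Tendsto (fun s => iteratedDeriv k g (s - (t₀ + ((-1 : ℤ) : ℝ)))) (𝓝 t₀)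
      (𝓝 (iteratedDeriv k g 1)) :=
    (hg.comp (continuous_sub_right _)).tendsto' _ _ (by simp)
  refine ((hlim.mono_left nhdsWithin_le_nhds).congr' ?_).mono_left
    (nhdsWithin_mono _ sdiff_subset)
  filter_upwards [Ioo_mem_nhdsLT (show t₀ - 1 < t₀ by linarith)] with s hs
  refine (iteratedDeriv_fractLoop_of_mem_Ioo (-1) k ?_).symm
  constructor <;> push_cast <;> linarith [hs.1, hs.2]

end fractLoop

theorem stmt8_general (t₀ : ℝ) (a : ℕ → ℝ) :
    ∃ γ : ℝ → ℝ, BoundedBreaksIn γ {t₀} ∧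
      ∀ k : ℕ, 1 ≤ k → ∃ Lp Lm : ℝ,
        RightLimAt (iteratedDeriv k γ) (BreaksSet {t₀}) t₀ Lp ∧
        LeftLimAt (iteratedDeriv k γ) (BreaksSet {t₀}) t₀ Lm ∧
        Lp - Lm = a k := by
  obtain ⟨g, hg, hg_vanish, hg_jet⟩ :=
    exists_contDiff_iteratedDeriv_zero_eq (Function.update a 0 0) (one_half_pos (α := ℝ))
  have hg_one : g =ᶠ[𝓝 1] fun _ => 0 := by
    filter_upwards [lt_mem_nhds (show (1 : ℝ) / 2 < 1 by norm_num)] with x hx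
    exact hg_vanish x (hx.le.trans (le_abs_self x))
  have h01 : g 0 = g 1 := by
    simpa [hg_one.eq_of_nhds] using hg_jet 0
  have hg_cont : ∀ k, Continuous (iteratedDeriv k g) := fun k =>
    hg.continuous_iteratedDeriv k (mod_cast le_top)
  refine ⟨fractLoop g t₀, boundedBreaksIn_fractLoop hg h01, fun k hk => ⟨_, _,
    rightLimAt_iteratedDeriv_fractLoop (hg_cont k) _,
    leftLimAt_iteratedDeriv_fractLoop (hg_cont k) _, ?_⟩⟩
  rw [hg_jet, hg_one.iteratedDeriv_eq, Function.update_of_ne (by omega), iteratedDeriv_const,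
    if_neg (by omega), sub_zero]

/-- (Borel-type theorem.) For every `t₀ ∈ [0,1)` and every sequence
`(a_k)_{k ≥ 1}` of reals there is a piecewise-smooth bounded loop `γ` with breaks in
`{t₀} + ℤ` whose one-sided limits of the `k`-th derivative at `t₀` satisfy
`γ⁽ᵏ⁾(t₀+) − γ⁽ᵏ⁾(t₀−) = a k` for every `k ≥ 1`. -/
theorem stmt8 (t₀ : ℝ) (ht₀ : t₀ ∈ Set.Ico (0:ℝ) 1) (a : ℕ → ℝ) :
    ∃ γ : ℝ → ℝ, BoundedBreaksIn γ {t₀} ∧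
      ∀ k : ℕ, 1 ≤ k → ∃ Lp Lm : ℝ,
        RightLimAt (iteratedDeriv k γ) (BreaksSet {t₀}) t₀ Lp ∧
        LeftLimAt (iteratedDeriv k γ) (BreaksSet {t₀}) t₀ Lm ∧
        Lp - Lm = a k :=
  stmt8_general t₀ a
end

section
/- Let X, Y, Z be Hausdorff locally convex topological vector spaces over ℝ, and let i : X → Y and q : Y → Z be continuous linear maps such that i is a topological embedding, q is surjective and an open map, and the range of i equals the kernel of q. If X and Z are complete (as uniform spaces), then Y is complete. -/
/-!
Let `f` be a Cauchy filter on `Y`. Its image converges in `Z` to some `q y₀`, so after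
translating by `y₀` we may assume `q` pushes `f` to `0`. Thickening `f` to the Cauchy filter
`f + 𝓝 0`, openness of `q` lets every set of the thickening meet `ker q = range i`, which is
complete. The trace of the thickening on the kernel therefore converges to some `y`, which is
then a cluster point, hence a limit, of the thickening and of the finer filter `f`.
-/

open Filter Set Topology Pointwise

theorem Cauchy.add {G : Type*} [AddGroup G] [UniformSpace G] [IsUniformAddGroup G]
    {f g : Filter G} (hf : Cauchy f) (hg : Cauchy g) : Cauchy (f + g) := by
  rw [← map₂_add, ← map_uncurry_prod]
  exact (hf.prod hg).map uniformContinuous_add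

theorem Filter.le_add_nhds_zero {M : Type*} [AddZeroClass M] [TopologicalSpace M]
    (f : Filter M) : f ≤ f + 𝓝 0 :=
  calc f = f + pure 0 := by rw [pure_zero, add_zero]
    _ ≤ f + 𝓝 0 := add_le_add le_rfl (pure_le_nhds 0)

section Extension

variable {Y Z F : Type*} [AddGroup Y] [AddGroup Z] [FunLike F Y Z] [AddMonoidHomClass F Y Z]

theorem neBot_add_nhds_zero_inf_ker [TopologicalSpace Y] [TopologicalSpace Z]
    [IsTopologicalAddGroup Z]
    {q : F} (hq : IsOpenMap q) {f : Filter Y} [f.NeBot] (hqf : Tendsto q f (𝓝 0)) :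
    ((f + 𝓝 0) ⊓ 𝓟 {y | q y = 0}).NeBot := by
  refine inf_principal_neBot_iff.2 fun s hs => ?_
  obtain ⟨A, hA, V, hV, hAV⟩ := Filter.mem_add.1 hs
  have hqV : -(q '' V) ∈ 𝓝 (0 : Z) := by
    simpa using neg_mem_nhds_zero Z (by simpa using hq.image_mem_nhds hV)
  obtain ⟨a, haA, v, hvV, hqv⟩ := Filter.nonempty_of_mem (inter_mem hA (hqf hqV))
  exact ⟨a + v, hAV (add_mem_add haA hvV), by simp [hqv]⟩

variable [UniformSpace Y] [IsUniformAddGroup Y] [UniformSpace Z] [IsUniformAddGroup Z]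

theorem Cauchy.exists_le_nhds_of_tendsto_zero {q : F} (hq : IsOpenMap q)
    (hker : IsComplete {y | q y = 0}) {f : Filter Y} (hf : Cauchy f)
    (hqf : Tendsto q f (𝓝 0)) : ∃ y, f ≤ 𝓝 y := by
  have := hf.1
  have hthick : Cauchy (f + 𝓝 0) := hf.add cauchy_nhds
  have := neBot_add_nhds_zero_inf_ker hq hqf
  obtain ⟨y, -, hy⟩ := hker _ (hthick.mono inf_le_left) inf_le_right
  exact ⟨y, (le_add_nhds_zero f).trans <|
    le_nhds_of_cauchy_adhp hthick ((ClusterPt.of_le_nhds hy).mono inf_le_left)⟩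

theorem completeSpace_of_isComplete_ker [CompleteSpace Z] {q : F} (hqc : Continuous q)
    (hsurj : Function.Surjective q) (hq : IsOpenMap q) (hker : IsComplete {y | q y = 0}) :
    CompleteSpace Y := by
  refine ⟨fun {f} hf => ?_⟩
  obtain ⟨z, hz⟩ :=
    CompleteSpace.complete (hf.map (uniformContinuous_addMonoidHom_of_continuous hqc))
  obtain ⟨y₀, rfl⟩ := hsurj z
  have hqf : Tendsto q (map (· - y₀) f) (𝓝 0) := by
    simpa [Function.comp_def] using Tendsto.sub_const hz (q y₀)
  obtain ⟨y, hy⟩ :=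
    (hf.map (uniformContinuous_sub_const y₀)).exists_le_nhds_of_tendsto_zero hq hker hqf
  exact ⟨y + y₀, (tendsto_sub_const_iff y₀).1 (by simpa [Tendsto] using hy)⟩

end Extension

theorem stmt10_general {X Y Z : Type}
    [AddCommGroup X] [Module ℝ X] [UniformSpace X] [IsUniformAddGroup X]
    [CompleteSpace X]
    [AddCommGroup Y] [Module ℝ Y] [UniformSpace Y] [IsUniformAddGroup Y]
    [AddCommGroup Z] [Module ℝ Z] [UniformSpace Z] [IsUniformAddGroup Z]
    [CompleteSpace Z]
    (i : X →L[ℝ] Y) (q : Y →L[ℝ] Z)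
    (hemb : Topology.IsEmbedding (⇑i)) (hsurj : Function.Surjective (⇑q))
    (hopen : IsOpenMap (⇑q))
    (hrange : Set.range (⇑i) = {y : Y | q y = 0}) :
    CompleteSpace Y :=
  completeSpace_of_isComplete_ker q.continuous hsurj hopen <|
    hrange ▸ (AddMonoidHom.isUniformInducing_of_isInducing hemb.isInducing).isComplete_range

/-- Let `X`, `Y`, `Z` be Hausdorff locally convex real topological vector
spaces (with their canonical uniform structures), `i : X → Y` a continuous linear
topological embedding and `q : Y → Z` a continuous linear open surjection with
`range i = ker q`.  If `X` and `Z` are complete then so is `Y`. -/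
theorem stmt10 {X Y Z : Type}
    [AddCommGroup X] [Module ℝ X] [UniformSpace X] [IsUniformAddGroup X]
    [ContinuousSMul ℝ X] [LocallyConvexSpace ℝ X] [T2Space X] [CompleteSpace X]
    [AddCommGroup Y] [Module ℝ Y] [UniformSpace Y] [IsUniformAddGroup Y]
    [ContinuousSMul ℝ Y] [LocallyConvexSpace ℝ Y] [T2Space Y]
    [AddCommGroup Z] [Module ℝ Z] [UniformSpace Z] [IsUniformAddGroup Z]
    [ContinuousSMul ℝ Z] [LocallyConvexSpace ℝ Z] [T2Space Z] [CompleteSpace Z]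
    (i : X →L[ℝ] Y) (q : Y →L[ℝ] Z)
    (hemb : Topology.IsEmbedding (⇑i)) (hsurj : Function.Surjective (⇑q))
    (hopen : IsOpenMap (⇑q))
    (hrange : Set.range (⇑i) = {y : Y | q y = 0}) :
    CompleteSpace Y :=
  stmt10_general i q hemb hsurj hopen hrange
end

section
/- Let σ : ℝ → ℝ be infinitely differentiable with σ(t + 1) = σ(t) + 1 and σ'(t) > 0 for all t. Let γ be a piecewise-smooth bounded loop whose derivative is bounded away from 0, i.e. there is M > 0 with |γ'(t)| ≥ M for all t at which γ' is defined. Then γ ∘ σ is a piecewise-smooth bounded loop whose derivative is bounded away from 0, and for every t ∈ ℝ: t is a sign-change point of (γ∘σ)' if and only if σ(t) is a sign-change point of γ'. -/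
open Set Filter Topology

/-!
On the complement of `σ⁻¹(F + ℤ)` the chain rule gives `(γ ∘ σ)' = (γ' ∘ σ) · σ'`. The derivative
`σ'` is continuous, positive and 1-periodic, so it is bounded below by a positive constant and all
its derivatives are bounded; Faà di Bruno's bound then controls every derivative of `γ ∘ σ`. Being an
increasing homeomorphism of `ℝ`, `σ` carries one-sided punctured neighbourhoods of `t` onto those
of `σ t`, and multiplying by the continuous positive factor `σ'` preserves the existence of
one-sided limits and their signs.
-/

theorem isClosed_breaksSet {F : Set ℝ} (hF : F.Finite) : IsClosed (BreaksSet F) := by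
  have h : BreaksSet F = ⋃ f ∈ F, (· - f) ⁻¹' range ((↑) : ℤ → ℝ) := by
    ext x
    simp [BreaksSet, sub_eq_iff_eq_add', eq_comm]
  rw [h]
  exact hF.isClosed_biUnion fun f _ =>
    Int.isClosedEmbedding_coe_real.isClosed_range.preimage (continuous_sub_right f)

section Periodic

variable {𝕜 F : Type*} [NontriviallyNormedField 𝕜] [NormedAddCommGroup F] [NormedSpace 𝕜 F]

theorem Function.Periodic.deriv {f : 𝕜 → F} {c : 𝕜} (hf : Function.Periodic f c) :
    Function.Periodic (deriv f) c := fun t => by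
  rw [← deriv_comp_add_const, funext hf]

theorem Function.Periodic.iteratedDeriv {f : 𝕜 → F} {c : 𝕜} (hf : Function.Periodic f c)
    (n : ℕ) : Function.Periodic (iteratedDeriv n f) c := by
  induction n with
  | zero => simpa using hf
  | succ n ih => simpa only [iteratedDeriv_succ] using ih.deriv

theorem periodic_deriv_of_map_add {σ : 𝕜 → 𝕜} {c d : 𝕜} (h : ∀ t, σ (t + c) = σ t + d) :
    Function.Periodic (deriv σ) c := fun t => by
  rw [← deriv_comp_add_const, funext h, deriv_add_const]

end Periodic

theorem Function.Periodic.exists_abs_le {f : ℝ → ℝ} {c : ℝ} (hp : Function.Periodic f c)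
    (hc : c ≠ 0) (hf : Continuous f) : ∃ C, ∀ t, |f t| ≤ C := by
  obtain ⟨C, hC⟩ := isBounded_iff_forall_norm_le.mp (hp.isBounded_of_continuous hc hf)
  exact ⟨C, fun t => hC _ (mem_range_self t)⟩

theorem Function.Periodic.exists_pos_le {f : ℝ → ℝ} {c : ℝ} (hp : Function.Periodic f c)
    (hc : c ≠ 0) (hf : Continuous f) (hpos : ∀ t, 0 < f t) : ∃ m, 0 < m ∧ ∀ t, m ≤ f t := by
  obtain ⟨_, ⟨t₀, rfl⟩, hmin⟩ :=
    (hp.compact_of_continuous hc hf).exists_isLeast (range_nonempty f)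
  exact ⟨f t₀, hpos t₀, fun t => hmin (mem_range_self t)⟩

theorem exists_abs_iteratedDeriv_succ_le_of_map_add_one {σ : ℝ → ℝ}
    (hσ : ContDiff ℝ (⊤ : ℕ∞) σ) (hσper : ∀ t, σ (t + 1) = σ t + 1) (k : ℕ) :
    ∃ D, ∀ t, |iteratedDeriv (k + 1) σ t| ≤ D := by
  rw [iteratedDeriv_succ']
  exact ((periodic_deriv_of_map_add hσper).iteratedDeriv k).exists_abs_le one_ne_zero
    ((contDiff_infty_iff_deriv.mp hσ).2.continuous_iteratedDeriv k (by exact_mod_cast le_top))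

theorem surjective_of_map_add_one {σ : ℝ → ℝ} (hσ : Continuous σ) (hmono : Monotone σ)
    (hσper : ∀ t, σ (t + 1) = σ t + 1) : Function.Surjective σ :=
  (CircleDeg1Lift.mk ⟨σ, hmono⟩ hσper).continuous_iff_surjective.mp hσ

theorem norm_iteratedFDerivWithin_eq_abs_iteratedDeriv {f : ℝ → ℝ} {s : Set ℝ} {x : ℝ}
    (hs : IsOpen s) (hx : x ∈ s) (n : ℕ) :
    ‖iteratedFDerivWithin ℝ n f s x‖ = |iteratedDeriv n f x| := by
  rw [norm_iteratedFDerivWithin_eq_norm_iteratedDerivWithin, iteratedDerivWithin_of_isOpen hs hx,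
    Real.norm_eq_abs]

theorem le_sum_range_abs (f : ℕ → ℝ) {i n : ℕ} (hi : i < n) :
    f i ≤ ∑ j ∈ Finset.range n, |f j| :=
  (le_abs_self _).trans
    (Finset.single_le_sum (fun j _ => abs_nonneg (f j)) (Finset.mem_range.mpr hi))

theorem exists_abs_iteratedDeriv_comp_le {γ σ : ℝ → ℝ} {U V : Set ℝ} (hU : IsOpen U)
    (hV : IsOpen V) (hγ : ContDiffOn ℝ (⊤ : ℕ∞) γ U) (hσ : ContDiffOn ℝ (⊤ : ℕ∞) σ V)
    (hVU : MapsTo σ V U) (hγb : ∀ k : ℕ, ∃ C, ∀ x ∈ U, |iteratedDeriv k γ x| ≤ C)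
    (hσb : ∀ k : ℕ, ∃ D, ∀ x ∈ V, |iteratedDeriv (k + 1) σ x| ≤ D) (n : ℕ) :
    ∃ C, ∀ x ∈ V, |iteratedDeriv n (γ ∘ σ) x| ≤ C := by
  choose Cs hCs using hγb
  choose Ds hDs using hσb
  set C := ∑ i ∈ Finset.range (n + 1), |Cs i|
  set D := 1 + ∑ i ∈ Finset.range n, |Ds i|
  have hD : 1 ≤ D := le_add_of_nonneg_right (Finset.sum_nonneg fun i _ => abs_nonneg (Ds i))
  refine ⟨n.factorial * C * D ^ n, fun x hx => ?_⟩
  rw [← norm_iteratedFDerivWithin_eq_abs_iteratedDeriv hV hx]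
  refine norm_iteratedFDerivWithin_comp_le hγ hσ (by exact_mod_cast le_top) hU.uniqueDiffOn
    hV.uniqueDiffOn hVU hx (fun i hi => ?_) (fun i hi hin => ?_)
  · rw [norm_iteratedFDerivWithin_eq_abs_iteratedDeriv hU (hVU hx)]
    exact (hCs i _ (hVU hx)).trans (le_sum_range_abs Cs (by omega))
  · obtain ⟨j, rfl⟩ := Nat.exists_eq_add_of_le' hi
    rw [norm_iteratedFDerivWithin_eq_abs_iteratedDeriv hV hx]
    calc |iteratedDeriv (j + 1) σ x| ≤ Ds j := hDs j x hx
      _ ≤ D := (le_sum_range_abs Ds (by omega)).trans (le_add_of_nonneg_left zero_le_one)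
      _ ≤ D ^ (j + 1) := le_self_pow₀ hD (by omega)

theorem OrderIso.tendsto_comp_nhdsWithin_preimage_iff {α β γ : Type*} [PartialOrder α]
    [PartialOrder β] [TopologicalSpace α] [TopologicalSpace β] [OrderTopology α] [OrderTopology β]
    (e : α ≃o β) {g : β → γ} {s : Set β} {x : α} {l : Filter γ} :
    Tendsto (g ∘ e) (𝓝[e ⁻¹' s] x) l ↔ Tendsto g (𝓝[s] (e x)) l := by
  rw [← tendsto_map'_iff, ← e.coe_toHomeomorph, e.toHomeomorph.isEmbedding.map_nhdsWithin_eq,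
    e.toHomeomorph.image_preimage]

theorem signChangeAt_comp_orderIso_iff (e : ℝ ≃o ℝ) {g : ℝ → ℝ} {B : Set ℝ} {t : ℝ} :
    SignChangeAt (g ∘ e) (e ⁻¹' B) t ↔ SignChangeAt g B (e t) := by
  have hIoi : Ioi t \ e ⁻¹' B = e ⁻¹' (Ioi (e t) \ B) := by
    rw [preimage_sdiff, e.preimage_Ioi, e.symm_apply_apply]
  have hIio : Iio t \ e ⁻¹' B = e ⁻¹' (Iio (e t) \ B) := by
    rw [preimage_sdiff, e.preimage_Iio, e.symm_apply_apply]
  simp only [SignChangeAt, RightLimAt, LeftLimAt, hIoi, hIio,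
    e.tendsto_comp_nhdsWithin_preimage_iff]

theorem tendsto_iff_of_eventuallyEq_mul {α : Type*} {l : Filter α} {f g h : α → ℝ} {c L : ℝ}
    (hh : Tendsto h l (𝓝 c)) (hc : c ≠ 0) (hf : f =ᶠ[l] g * h) :
    Tendsto f l (𝓝 (L * c)) ↔ Tendsto g l (𝓝 L) := by
  constructor
  · intro hfL
    have hg : g =ᶠ[l] f / h := by
      filter_upwards [hf, hh.eventually_ne hc] with x hx hx0
      simp [hx, hx0]
    simpa [hc] using (hfL.div hh hc).congr' hg.symm
  · exact fun hgL => (hgL.mul hh).congr' hf.symm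

theorem signChangeAt_iff_of_eq_mul {f g h : ℝ → ℝ} {B : Set ℝ} {t : ℝ} (hh : ContinuousAt h t)
    (ht : h t ≠ 0) (hf : ∀ s ∉ B, f s = g s * h s) :
    SignChangeAt f B t ↔ SignChangeAt g B t := by
  have key : ∀ (S : Set ℝ) (L : ℝ),
      Tendsto f (𝓝[S \ B] t) (𝓝 (L * h t)) ↔ Tendsto g (𝓝[S \ B] t) (𝓝 L) := fun S L =>
    tendsto_iff_of_eventuallyEq_mul (hh.tendsto.mono_left nhdsWithin_le_nhds) ht
      (eventually_nhdsWithin_of_forall fun s hs => hf s hs.2)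
  have hsq : 0 < h t * h t := mul_self_pos.mpr ht
  constructor
  · rintro ⟨Lp, Lm, hp, hm, hs⟩
    refine ⟨Lp / h t, Lm / h t, (key _ _).mp ?_, (key _ _).mp ?_, ?_⟩
    · rwa [div_mul_cancel₀ _ ht]
    · rwa [div_mul_cancel₀ _ ht]
    · rw [div_mul_div_comm]
      exact div_neg_of_neg_of_pos hs hsq
  · rintro ⟨Lp, Lm, hp, hm, hs⟩
    refine ⟨Lp * h t, Lm * h t, (key _ _).mpr hp, (key _ _).mpr hm, ?_⟩
    rw [mul_mul_mul_comm]
    exact mul_neg_of_neg_of_pos hs hsq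

theorem stmt12_general (σ : ℝ → ℝ) (hσ : ContDiff ℝ (⊤ : ℕ∞) σ)
    (hσper : ∀ t, σ (t + 1) = σ t + 1) (hσpos : ∀ t, 0 < deriv σ t)
    (γ : ℝ → ℝ) (F : Set ℝ) (hFfin : F.Finite)
    (hγ : BoundedBreaksIn γ F)
    (M : ℝ) (hM : 0 < M) (hbdd : ∀ t ∈ (BreaksSet F)ᶜ, M ≤ |deriv γ t|) :
    ((∀ t, (γ ∘ σ) (t + 1) = (γ ∘ σ) t) ∧ Continuous (γ ∘ σ) ∧
      ContDiffOn ℝ (⊤ : ℕ∞) (γ ∘ σ) (σ ⁻¹' BreaksSet F)ᶜ ∧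
      (∀ k : ℕ, ∃ M' : ℝ, ∀ t ∈ (σ ⁻¹' BreaksSet F)ᶜ, |iteratedDeriv k (γ ∘ σ) t| ≤ M') ∧
      (∃ M' : ℝ, 0 < M' ∧ ∀ t ∈ (σ ⁻¹' BreaksSet F)ᶜ, M' ≤ |deriv (γ ∘ σ) t|)) ∧
    (∀ t : ℝ, SignChangeAt (deriv (γ ∘ σ)) (σ ⁻¹' BreaksSet F) t ↔
      SignChangeAt (deriv γ) (BreaksSet F) (σ t)) := by
  obtain ⟨⟨hγper, hγcont, hγsmooth⟩, hγbd⟩ := hγ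
  have hU : IsOpen (BreaksSet F)ᶜ := (isClosed_breaksSet hFfin).isOpen_compl
  have hV : IsOpen (σ ⁻¹' BreaksSet F)ᶜ := hU.preimage hσ.continuous
  have hmaps : MapsTo σ (σ ⁻¹' BreaksSet F)ᶜ (BreaksSet F)ᶜ := fun _ hx => hx
  have hdσ : Continuous (deriv σ) := hσ.continuous_deriv (by exact_mod_cast le_top)
  have hchain : ∀ s ∉ σ ⁻¹' BreaksSet F, deriv (γ ∘ σ) s = deriv γ (σ s) * deriv σ s :=
    fun s hs => deriv_comp s ((hγsmooth.contDiffAt (hU.mem_nhds hs)).differentiableAt (by simp))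
      (hσ.differentiable (by simp) s)
  obtain ⟨m, hm, hmσ⟩ := (periodic_deriv_of_map_add hσper).exists_pos_le one_ne_zero hdσ hσpos
  have hmono : StrictMono σ := strictMono_of_deriv_pos hσpos
  let e : ℝ ≃o ℝ := hmono.orderIsoOfSurjective σ
    (surjective_of_map_add_one hσ.continuous hmono.monotone hσper)
  refine ⟨⟨fun t => by simp only [Function.comp_apply, hσper, hγper], hγcont.comp hσ.continuous,
    hγsmooth.comp hσ.contDiffOn hmaps, exists_abs_iteratedDeriv_comp_le hU hV hγsmooth
      hσ.contDiffOn hmaps hγbd fun k => ?_, M * m, mul_pos hM hm, fun t ht => ?_⟩, fun t => ?_⟩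
  · obtain ⟨D, hD⟩ := exists_abs_iteratedDeriv_succ_le_of_map_add_one hσ hσper k
    exact ⟨D, fun x _ => hD x⟩
  · rw [hchain t ht, abs_mul, abs_of_pos (hσpos t)]
    exact mul_le_mul (hbdd _ ht) (hmσ t) hm.le (abs_nonneg _)
  · rw [signChangeAt_iff_of_eq_mul hdσ.continuousAt (hσpos t).ne' hchain]
    exact signChangeAt_comp_orderIso_iff e (g := deriv γ)

/-- Precomposition with (a lift of) an orientation-preserving
diffeomorphism `σ` of the circle sends a piecewise-smooth bounded loop whose derivative
is bounded away from `0` to another such loop, and `t` is a sign-change point of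
`(γ∘σ)'` iff `σ t` is a sign-change point of `γ'`. -/
theorem stmt12 (σ : ℝ → ℝ) (hσ : ContDiff ℝ (⊤ : ℕ∞) σ)
    (hσper : ∀ t, σ (t + 1) = σ t + 1) (hσpos : ∀ t, 0 < deriv σ t)
    (γ : ℝ → ℝ) (F : Set ℝ) (hFfin : F.Finite) (hFsub : F ⊆ Set.Ico 0 1)
    (hγ : BoundedBreaksIn γ F)
    (M : ℝ) (hM : 0 < M) (hbdd : ∀ t ∈ (BreaksSet F)ᶜ, M ≤ |deriv γ t|) :
    ((∀ t, (γ ∘ σ) (t + 1) = (γ ∘ σ) t) ∧ Continuous (γ ∘ σ) ∧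
      ContDiffOn ℝ (⊤ : ℕ∞) (γ ∘ σ) (σ ⁻¹' BreaksSet F)ᶜ ∧
      (∀ k : ℕ, ∃ M' : ℝ, ∀ t ∈ (σ ⁻¹' BreaksSet F)ᶜ, |iteratedDeriv k (γ ∘ σ) t| ≤ M') ∧
      (∃ M' : ℝ, 0 < M' ∧ ∀ t ∈ (σ ⁻¹' BreaksSet F)ᶜ, M' ≤ |deriv (γ ∘ σ) t|)) ∧
    (∀ t : ℝ, SignChangeAt (deriv (γ ∘ σ)) (σ ⁻¹' BreaksSet F) t ↔
      SignChangeAt (deriv γ) (BreaksSet F) (σ t)) :=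
  stmt12_general σ hσ hσper hσpos γ F hFfin hγ M hM hbdd
end

section
/- Let β : ℝ → ℝ be 1-periodic, Lebesgue integrable on [0,1], and S¹-odd. Then the function A_c(t) = ∫₀ᵗ β(s) ds + c is 1-periodic for every c ∈ ℝ, and there is exactly one constant c for which A_c is S¹-odd, namely c = −(1/2)·∫₀^{1/2} β(s) ds. -/
open MeasureTheory intervalIntegral

lemma periodic_intervalIntegrable_all {β : ℝ → ℝ} (hp : Function.Periodic β 1)
    (h01 : IntervalIntegrable β volume 0 1) :
    ∀ a b : ℝ, IntervalIntegrable β volume a b := by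
  have hunit : ∀ n : ℤ, IntervalIntegrable β volume n (n + 1) := by
    intro n
    have h := h01.comp_add_right (-n)
    have he : (fun x : ℝ => β (x + (-n : ℝ))) = β := by
      funext x
      have h2 : ((-n : ℤ) : ℝ) = (-n : ℤ) • (1 : ℝ) := by simp
      have := (hp.zsmul (-n)) x
      push_cast at this
      simpa using this
    rw [he] at h
    have e0 : (0 : ℝ) - (-n) = n := by ring
    have e1 : (1 : ℝ) - (-n) = n + 1 := by ring
    rw [e0, e1] at h
    exact h
  have hN : ∀ N : ℕ, IntervalIntegrable β volume (-(N : ℝ)) (N : ℝ) := by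
    intro N
    induction N with
    | zero => simp
    | succ k ih =>
      have h1 : IntervalIntegrable β volume (-(k : ℝ) - 1) (-(k : ℝ)) := by
        have h := hunit (-(k : ℤ) - 1)
        push_cast at h
        have e : (-(k:ℝ) - 1) + 1 = -(k:ℝ) := by ring
        rwa [e] at h
      have h2 : IntervalIntegrable β volume (k : ℝ) ((k : ℝ) + 1) := by
        have h := hunit (k : ℤ)
        push_cast at h
        exact h
      have h3 := (h1.trans ih).trans h2
      push_cast
      have e : -((k:ℝ) + 1) = -(k:ℝ) - 1 := by ring
      rw [e]
      exact h3
  intro a b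
  obtain ⟨N, hNa, hNb⟩ : ∃ N : ℕ, |a| ≤ N ∧ |b| ≤ N := by
    obtain ⟨N, hN⟩ := exists_nat_ge (max |a| |b|)
    exact ⟨N, (le_max_left _ _).trans hN, (le_max_right _ _).trans hN⟩
  rw [abs_le] at hNa hNb
  refine (hN N).mono_set (Set.uIcc_subset_uIcc ?_ ?_) <;>
    · rw [Set.uIcc_of_le (by linarith : -(N:ℝ) ≤ N), Set.mem_Icc]
      constructor <;> linarith [hNa.1, hNa.2, hNb.1, hNb.2]

/-- For a 1-periodic, Lebesgue-integrable-on-`[0,1]`, S¹-odd function `β`,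
the function `A_c(t) = ∫₀ᵗ β + c` is 1-periodic for every `c`, and `A_c` is S¹-odd
exactly for the single constant `c = −(1/2)·∫₀^{1/2} β`. -/
theorem stmt16 (β : ℝ → ℝ) (hper : ∀ t, β (t + 1) = β t)
    (hint : MeasureTheory.IntegrableOn β (Set.Icc 0 1))
    (hodd : ∀ t, β t + β (t + 1/2) = 0) :
    (∀ c : ℝ, ∀ t : ℝ,
      ((∫ s in (0:ℝ)..(t + 1), β s) + c) = ((∫ s in (0:ℝ)..t, β s) + c)) ∧
    (∀ c : ℝ,
      (∀ t : ℝ, ((∫ s in (0:ℝ)..t, β s) + c) + ((∫ s in (0:ℝ)..(t + 1/2), β s) + c) = 0)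
        ↔ c = -(1/2) * ∫ s in (0:ℝ)..(1/2), β s) := by
  have hp : Function.Periodic β 1 := hper
  have h01 : IntervalIntegrable β volume 0 1 := by
    rw [intervalIntegrable_iff_integrableOn_Icc_of_le zero_le_one]; exact hint
  have hall := periodic_intervalIntegrable_all hp h01
  -- ∫₀¹ β = 0
  have hI1 : (∫ s in (0:ℝ)..1, β s) = 0 := by
    have h2 : (∫ s in (0:ℝ)..(1/2), β s) + (∫ s in (1/2:ℝ)..1, β s)
        = ∫ s in (0:ℝ)..1, β s :=
      integral_add_adjacent_intervals (hall _ _) (hall _ _)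
    have h3 : (∫ s in (1/2:ℝ)..1, β s) = ∫ s in (0:ℝ)..(1/2), β (s + 1/2) := by
      rw [intervalIntegral.integral_comp_add_right]
      norm_num
    have h4 : (∫ s in (0:ℝ)..(1/2), β (s + 1/2)) = ∫ s in (0:ℝ)..(1/2), -β s :=
      integral_congr fun s _ => by linarith [hodd s]
    rw [intervalIntegral.integral_neg] at h4
    linarith [h2, h3 ▸ h4]
  -- key identity
  have hkey : ∀ t : ℝ, (∫ s in (0:ℝ)..t, β s) + (∫ s in (0:ℝ)..(t + 1/2), β s)
      = ∫ s in (0:ℝ)..(1/2), β s := by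
    intro t
    have h2 : (∫ s in (0:ℝ)..(1/2), β s) + (∫ s in (1/2:ℝ)..(t + 1/2), β s)
        = ∫ s in (0:ℝ)..(t + 1/2), β s :=
      integral_add_adjacent_intervals (hall _ _) (hall _ _)
    have h3 : (∫ s in (1/2:ℝ)..(t + 1/2), β s) = ∫ s in (0:ℝ)..t, β (s + 1/2) := by
      rw [intervalIntegral.integral_comp_add_right]
      norm_num
    have h4 : (∫ s in (0:ℝ)..t, β (s + 1/2)) = ∫ s in (0:ℝ)..t, -β s :=
      integral_congr fun s _ => by linarith [hodd s]
    rw [intervalIntegral.integral_neg] at h4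
    linarith [h2, h3 ▸ h4]
  constructor
  · intro c t
    have := hp.intervalIntegral_add_eq_add 0 t hall
    rw [zero_add] at this
    rw [this, hI1]
    ring
  · intro c
    constructor
    · intro h
      have h0 := h 0
      rw [intervalIntegral.integral_same, zero_add] at h0
      linarith
    · intro hc t
      have := hkey t
      rw [hc]
      linarith
end

section
/- Let β₀ be the 1-periodic step function with β₀(t) = 1 for t ∈ [0, 1/2) and β₀(t) = −1 for t ∈ [1/2, 1), and for s ∈ ℝ let R_sβ₀ denote the function u ↦ β₀(u + s). Let k ∈ ℕ, let 0 = t₀ < t₁ < ⋯ < t_k < 1/2 and ξ₀, …, ξ_k ∈ ℝ, and set γ = Σ_{j=0}^{k} ξ_j · R_{t_j}β₀. Then γ has bounded variation on [0,1] and the total variation of γ over [0,1] equals 4·Σ_{j=0}^{k} |ξ_j|. -/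
/-!
On `[0, 1/2]` the summand `ξ_j R_{t_j}β₀` is a single step from `ξ_j` down to `-ξ_j` at
`1/2 - t_j`; these points are distinct, so the jumps do not interact and the variation there is
`Σ 2|ξ_j|` (peel off the leftmost jump and induct). Since `β₀(u + 1/2) = -β₀(u)`, `γ` is
`1/2`-antiperiodic, hence has the same variation on `[1/2, 1]`, which gives `4 Σ |ξ_j|`.
-/

open Set Filter Topology

theorem Isometry.eVariationOn_comp {α E F : Type*} [LinearOrder α] [PseudoEMetricSpace E]
    [PseudoEMetricSpace F] {φ : E → F} (hφ : Isometry φ) (f : α → E) (s : Set α) :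
    eVariationOn (φ ∘ f) s = eVariationOn f s := by
  simp only [eVariationOn, Function.comp_apply, hφ.edist_eq]

theorem eVariationOn_Icc_eq_edist_of_eqOn_Ico {α E : Type*} [LinearOrder α] [TopologicalSpace α]
    [OrderTopology α] [DenselyOrdered α] [PseudoEMetricSpace E] {f : α → E} {a b : α}
    (hab : a < b) (hf : ∀ u ∈ Ico a b, f u = f a) :
    eVariationOn f (Icc a b) = edist (f b) (f a) := by
  have hIco : Icc a b ∩ Iio b = Ico a b := by
    ext u
    simp only [mem_inter_iff, mem_Icc, mem_Iio, mem_Ico]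
    exact ⟨fun h ↦ ⟨h.1.1, h.2⟩, fun h ↦ ⟨⟨h.1, h.2.le⟩, h.2⟩⟩
  have hconst : eVariationOn f (Ico a b) = 0 := eVariationOn.constant_on <| by
    rintro _ ⟨u, hu, rfl⟩ _ ⟨v, hv, rfl⟩
    rw [hf u hu, hf v hv]
  have hlim : Tendsto f (𝓝[Icc a b ∩ Iio b] b) (𝓝 (f a)) :=
    tendsto_const_nhds.congr' <| by
      rw [hIco]
      filter_upwards [self_mem_nhdsWithin] with u hu using (hf u hu).symm
  have hleftLim := eVariationOn.eVariationOn_on_inter_Iic_eq_Iio_add_edist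
    (by rw [hIco]; exact right_nhdsWithin_Ico_neBot hab) (right_mem_Icc.2 hab.le) hlim
  rwa [inter_eq_left.2 Icc_subset_Iic_self, hIco, hconst, zero_add] at hleftLim

theorem eVariationOn_Icc_sum_ite_lt {α E : Type*} [LinearOrder α] [TopologicalSpace α]
    [OrderTopology α] [DenselyOrdered α] [SeminormedAddCommGroup E] {n : ℕ} {s : ℕ → α}
    (x y : ℕ → E) {a b : α} (hs : StrictAntiOn s (Iio n)) (has : ∀ j < n, a < s j)
    (hsb : ∀ j < n, s j ≤ b) :
    eVariationOn (fun u ↦ ∑ j ∈ Finset.range n, if u < s j then x j else y j) (Icc a b) =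
      ∑ j ∈ Finset.range n, edist (x j) (y j) := by
  induction n generalizing a with
  | zero =>
    simpa using eVariationOn.constant_on
      (subsingleton_singleton.anti (image_subset_iff.2 fun _ _ ↦ rfl))
  | succ n ih =>
    set f := fun u ↦ ∑ j ∈ Finset.range n, if u < s j then x j else y j
    have hsn : ∀ j < n, s n < s j := fun j hj ↦ hs (mem_Iio.2 (by omega)) (by simp) hj
    have hbelow : ∀ u < s n, (∑ j ∈ Finset.range (n + 1), if u < s j then x j else y j) =
        ∑ j ∈ Finset.range (n + 1), x j := fun u hu ↦ Finset.sum_congr rfl fun j hj ↦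
      if_pos (hu.trans_le (hs.antitoneOn (mem_Iio.2 (Finset.mem_range.1 hj)) (by simp)
        (Finset.mem_range_succ_iff.1 hj)))
    have hat : (∑ j ∈ Finset.range (n + 1), if s n < s j then x j else y j) =
        ∑ j ∈ Finset.range n, x j + y n := by
      rw [Finset.sum_range_succ, if_neg (lt_irrefl _)]
      exact congrArg (· + y n)
        (Finset.sum_congr rfl fun j hj ↦ if_pos (hsn j (Finset.mem_range.1 hj)))
    have habove : EqOn (fun u ↦ ∑ j ∈ Finset.range (n + 1), if u < s j then x j else y j)
        ((· + y n) ∘ f) (Icc (s n) b) := fun u hu ↦ by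
      simp only [Finset.sum_range_succ, if_neg (not_lt.2 hu.1), Function.comp_apply, f]
    have hsplit := eVariationOn.Icc_add_Icc
      (fun u ↦ ∑ j ∈ Finset.range (n + 1), if u < s j then x j else y j)
      (has n n.lt_succ_self).le (hsb n n.lt_succ_self) (mem_univ _)
    simp only [univ_inter] at hsplit
    rw [← hsplit, eVariationOn_Icc_eq_edist_of_eqOn_Ico (has n n.lt_succ_self)
        fun u hu ↦ (hbelow u hu.2).trans (hbelow a (has n n.lt_succ_self)).symm,
      hat, hbelow a (has n n.lt_succ_self), Finset.sum_range_succ, edist_add_left,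
      eVariationOn.eq_of_eqOn habove, (isometry_add_right (y n)).eVariationOn_comp,
      ih (hs.mono (Iio_subset_Iio n.le_succ)) hsn fun j hj ↦ hsb j (by omega),
      Finset.sum_range_succ, add_comm, edist_comm]

theorem Function.Antiperiodic.eVariationOn_Icc_two_mul {E : Type*} [SeminormedAddCommGroup E]
    {f : ℝ → E} {c : ℝ} (hf : Antiperiodic f c) (hc : 0 ≤ c) :
    eVariationOn f (Icc 0 (2 * c)) = 2 * eVariationOn f (Icc 0 c) := by
  have hshift : eVariationOn f (Icc c (2 * c)) = eVariationOn f (Icc 0 c) := calc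
    eVariationOn f (Icc c (2 * c)) = eVariationOn (f ∘ (· + c)) (Icc 0 c) := by
      rw [eVariationOn.comp_eq_of_monotoneOn _ _ (add_left_mono.monotoneOn _),
        image_add_const_Icc, zero_add, two_mul]
    _ = eVariationOn (Neg.neg ∘ f) (Icc 0 c) := congrArg (eVariationOn · _) (funext hf)
    _ = eVariationOn f (Icc 0 c) := isometry_neg.eVariationOn_comp f _
  have hsplit := eVariationOn.Icc_add_Icc f (s := univ) hc (by linarith : c ≤ 2 * c) (mem_univ c)
  simp only [univ_inter] at hsplit
  rw [← hsplit, hshift, two_mul]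

lemma stepLoop_antiperiodic : Function.Antiperiodic stepLoop (1/2) := fun x ↦ by
  have h0 := Int.fract_nonneg x
  have h1 := Int.fract_lt_one x
  have hx := Int.self_sub_fract x
  unfold stepLoop
  by_cases h : Int.fract x < 1/2
  · have : Int.fract (x + 1/2) = Int.fract x + 1/2 :=
      Int.fract_eq_iff.2 ⟨by linarith, by linarith, ⌊x⌋, by linarith⟩
    rw [this, if_pos h, if_neg (by linarith)]
  · have : Int.fract (x + 1/2) = Int.fract x - 1/2 :=
      Int.fract_eq_iff.2 ⟨by linarith, by linarith, ⌊x⌋ + 1, by push_cast; linarith⟩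
    rw [this, if_neg h, if_pos (by linarith), neg_neg]

lemma stepLoop_add_of_mem_Icc {u t : ℝ} (hu : u ∈ Icc 0 (1/2)) (ht0 : 0 ≤ t) (ht : t < 1/2) :
    stepLoop (u + t) = if u < 1/2 - t then 1 else -1 := by
  rw [stepLoop, Int.fract_eq_self.2 ⟨by linarith [hu.1], by linarith [hu.2]⟩]
  exact if_congr lt_sub_iff_add_lt.symm rfl rfl

lemma eVariationOn_sum_stepLoop_Icc_zero_half {n : ℕ} {t : ℕ → ℝ} (ξ : ℕ → ℝ)
    (ht : StrictMonoOn t (Iio n)) (ht0 : ∀ j < n, 0 ≤ t j) (ht_half : ∀ j < n, t j < 1/2) :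
    eVariationOn (fun u ↦ ∑ j ∈ Finset.range n, ξ j * stepLoop (u + t j)) (Icc 0 (1/2)) =
      ∑ j ∈ Finset.range n, edist (ξ j) (-ξ j) := by
  rw [eVariationOn.eq_of_eqOn (f' := fun u ↦
    ∑ j ∈ Finset.range n, if u < 1/2 - t j then ξ j else -ξ j)]
  · exact eVariationOn_Icc_sum_ite_lt _ _ (fun i hi j hj hij ↦ by linarith [ht hi hj hij])
      (fun j hj ↦ by linarith [ht_half j hj]) (fun j hj ↦ by linarith [ht0 j hj])
  · refine fun u hu ↦ Finset.sum_congr rfl fun j hj ↦ ?_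
    have hj := Finset.mem_range.1 hj
    rw [stepLoop_add_of_mem_Icc hu (ht0 j hj) (ht_half j hj), mul_ite, mul_one, mul_neg_one]

lemma edist_neg_self_real (x : ℝ) : edist x (-x) = ENNReal.ofReal (2 * |x|) := by
  rw [edist_dist, Real.dist_eq, sub_neg_eq_add, ← two_mul, abs_mul, abs_two]

/-- For `0 = t₀ < t₁ < ⋯ < t_k < 1/2` and reals `ξ₀, …, ξ_k`, the loop
`γ = Σ_j ξ_j · R_{t_j}β₀` has bounded variation on `[0,1]` and its total variation over
`[0,1]` equals `4·Σ_j |ξ_j|`. -/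
theorem stmt17 (k : ℕ) (t ξ : ℕ → ℝ) (ht0 : t 0 = 0)
    (hmono : ∀ i < k, t i < t (i + 1)) (hlt : ∀ i ≤ k, t i < 1/2)
    (γ : ℝ → ℝ)
    (hγ : γ = fun u => ∑ j ∈ Finset.range (k + 1), ξ j * stepLoop (u + t j)) :
    BoundedVariationOn γ (Set.Icc 0 1) ∧
    eVariationOn γ (Set.Icc 0 1) =
      ENNReal.ofReal (4 * ∑ j ∈ Finset.range (k + 1), |ξ j|) := by
  have ht : StrictMonoOn t (Iio (k + 1)) := Order.Iio_succ k ▸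
    strictMonoOn_Iic_of_lt_succ fun m hm ↦ by simpa using hmono m hm
  have ht_nonneg : ∀ j < k + 1, 0 ≤ t j := fun j hj ↦
    ht0 ▸ ht.monotoneOn (by simp) (mem_Iio.2 hj) (Nat.zero_le j)
  have hγ_anti : Function.Antiperiodic γ (1/2) := fun u ↦ by
    simp only [hγ, add_right_comm u, stepLoop_antiperiodic _, mul_neg, Finset.sum_neg_distrib]
  have htotal : eVariationOn γ (Icc 0 1) =
      ENNReal.ofReal (4 * ∑ j ∈ Finset.range (k + 1), |ξ j|) := by
    have hdouble := hγ_anti.eVariationOn_Icc_two_mul (by norm_num)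
    rw [show (2 : ℝ) * (1/2) = 1 by norm_num] at hdouble
    rw [hdouble, hγ, eVariationOn_sum_stepLoop_Icc_zero_half ξ ht ht_nonneg
        fun j hj ↦ hlt j (Nat.lt_succ_iff.1 hj)]
    simp only [edist_neg_self_real]
    rw [← ENNReal.ofReal_sum_of_nonneg (fun j _ ↦ by positivity), ← Finset.mul_sum,
      ← ENNReal.ofReal_ofNat 2, ← ENNReal.ofReal_mul zero_le_two, ← mul_assoc]
    norm_num
  exact ⟨htotal.trans_ne ENNReal.ofReal_ne_top, htotal⟩
end

section
/- Let β₀ be the 1-periodic step function with β₀(t) = 1 for t ∈ [0, 1/2) and β₀(t) = −1 for t ∈ [1/2, 1), and R_sβ₀ the translate u ↦ β₀(u + s). Let 0 = t₀ < t₁ < ⋯ < t_k < 1/2, ξ₀, …, ξ_k ∈ ℝ, and γ = Σ_{j=0}^{k} ξ_j · R_{t_j}β₀. Then for 0 ≤ j ≤ k − 1, ξ_j = (1/2)·(γ(1/2 − t_{j+1}) − γ(1/2 − t_j)), and ξ_k = (1/2)·(γ(0) − γ(1/2 − t_k)). -/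
/-- For `0 = t₀ < t₁ < ⋯ < t_k < 1/2`, `ξ₀, …, ξ_k ∈ ℝ` and
`γ = Σ_j ξ_j · R_{t_j}β₀`, the coefficients are recovered by
`ξ_j = (1/2)(γ(1/2 − t_{j+1}) − γ(1/2 − t_j))` for `j < k` and
`ξ_k = (1/2)(γ(0) − γ(1/2 − t_k))`. -/
theorem stmt18 (k : ℕ) (t ξ : ℕ → ℝ) (ht0 : t 0 = 0)
    (hmono : ∀ i < k, t i < t (i + 1)) (hlt : ∀ i ≤ k, t i < 1/2)
    (γ : ℝ → ℝ)
    (hγ : γ = fun u => ∑ j ∈ Finset.range (k + 1), ξ j * stepLoop (u + t j)) :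
    (∀ j < k, ξ j = (1/2) * (γ (1/2 - t (j + 1)) - γ (1/2 - t j))) ∧
    ξ k = (1/2) * (γ 0 - γ (1/2 - t k)) := by
  have hmono' : ∀ i j, i < j → j ≤ k → t i < t j := by
    intro i j hij hjk
    induction j with
    | zero => omega
    | succ n ih =>
      rcases Nat.lt_succ_iff_lt_or_eq.mp hij with h | h
      · exact lt_trans (ih h (by omega)) (hmono n (by omega))
      · subst h; exact hmono i (by omega)
  have hnn : ∀ i, i ≤ k → 0 ≤ t i := by
    intro i hi
    rcases Nat.eq_zero_or_pos i with h | h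
    · simp [h, ht0]
    · linarith [hmono' 0 i h hi]
  have hle : ∀ i ≤ k, ∀ j ≤ k, ¬ i < j → t j ≤ t i := by
    intro i hi j hj h
    rcases Nat.lt_or_ge j i with h' | h'
    · exact (hmono' j i h' hi).le
    · have : i = j := by omega
      subst this; exact le_rfl
  have hstep1 : ∀ x : ℝ, 0 ≤ x → x < 1/2 → stepLoop x = 1 := by
    intro x h1 h2
    simp only [stepLoop]
    rw [Int.fract_eq_self.mpr ⟨h1, by linarith⟩, if_pos h2]
  have hstep2 : ∀ x : ℝ, 1/2 ≤ x → x < 1 → stepLoop x = -1 := by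
    intro x h1 h2
    simp only [stepLoop]
    rw [Int.fract_eq_self.mpr ⟨by linarith, h2⟩, if_neg (not_lt.mpr h1)]
  have hA : ∀ j ≤ k, γ (1/2 - t j) =
      ∑ i ∈ Finset.range (k+1), (if i < j then ξ i else -ξ i) := by
    intro j hj
    rw [hγ]
    simp only
    apply Finset.sum_congr rfl
    intro i hi
    simp only [Finset.mem_range] at hi
    have hik : i ≤ k := by omega
    by_cases h : i < j
    · have h1 : t i < t j := hmono' i j h hj
      rw [hstep1 (1/2 - t j + t i) (by linarith [hnn i hik, hlt j hj]) (by linarith)]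
      simp [h]
    · have h1 : t j ≤ t i := hle i hik j hj h
      rw [hstep2 (1/2 - t j + t i) (by linarith) (by linarith [hnn j hj, hlt i hik])]
      simp [h]
  have hB : γ 0 = ∑ i ∈ Finset.range (k+1), ξ i := by
    rw [hγ]
    simp only
    apply Finset.sum_congr rfl
    intro i hi
    simp only [Finset.mem_range] at hi
    have hik : i ≤ k := by omega
    rw [zero_add, hstep1 (t i) (hnn i hik) (hlt i hik), mul_one]
  constructor
  · intro j hj
    rw [hA (j+1) (by omega), hA j (by omega), ← Finset.sum_sub_distrib]
    have hcongr : ∀ i ∈ Finset.range (k+1),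
        ((if i < j+1 then ξ i else -ξ i) - (if i < j then ξ i else -ξ i))
          = if i = j then 2 * ξ i else 0 := by
      intro i _
      rcases lt_trichotomy i j with h | h | h
      · simp [h, Nat.lt_succ_of_lt h, Nat.ne_of_lt h]
      · subst h
        simp; ring
      · have h1 : ¬ i < j + 1 := by omega
        have h2 : ¬ i < j := by omega
        simp [h1, h2, Nat.ne_of_gt h]
    rw [Finset.sum_congr rfl hcongr, Finset.sum_ite_eq' (Finset.range (k+1)) j]
    simp only [Finset.mem_range]
    rw [if_pos (by omega)]
    ring
  · rw [hB, hA k le_rfl, ← Finset.sum_sub_distrib]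
    have hcongr : ∀ i ∈ Finset.range (k+1),
        (ξ i - (if i < k then ξ i else -ξ i)) = if i = k then 2 * ξ i else 0 := by
      intro i hi
      simp only [Finset.mem_range] at hi
      rcases lt_or_eq_of_le (Nat.lt_succ_iff.mp hi) with h | h
      · simp [h, Nat.ne_of_lt h]
      · subst h; simp; ring
    rw [Finset.sum_congr rfl hcongr, Finset.sum_ite_eq' (Finset.range (k+1)) k]
    rw [if_pos (Finset.mem_range.mpr (by omega))]
    ring
end
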